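/- arXiv:math/0402210 — 2 statements merged into one kernel-verified Lean document; each statement's English description precedes it below -/
import Mathlib

section
/- Suppose (M,ω) is a closed symplectic manifold satisfying the energy–capacity inequality: every closed ball B displaceable by a Hamiltonian diffeomorphism has positive displacement energy e(B) = inf{‖K‖ : φ_K¹(B) ∩ B = ∅} > 0. Let φ_{H_i} be a sequence of smooth Hamiltonian paths and φ_H a smooth Hamiltonian path such that ‖H̄ # H_i‖ → 0 and φ_{H_i}¹ converges uniformly to a map ψ : M → M. Then ψ = φ_H¹. -/
open Filter Topology Metric

/-! If `ψ ≠ φ`, then `φ⁻¹ ∘ ψ` moves some point `x₀`, so by uniform convergence the maps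
`φ⁻¹ ∘ ψ_i` eventually displace a small closed ball around `x₀`. By the energy–capacity
inequality their Hofer norms stay above the positive displacement energy of that ball,
contradicting `ν(φ⁻¹ ∘ ψ_i) → 0`. -/

theorem tendsto_uncurry_prod_nhds_of_tendstoUniformly {ι X Y : Type*} [TopologicalSpace X]
    [UniformSpace Y] {F : ι → X → Y} {f : X → Y} {p : Filter ι} {x : X}
    (hF : TendstoUniformly F f p) (hf : ContinuousAt f x) :
    Tendsto (fun q : ι × X => F q.1 q.2) (p ×ˢ 𝓝 x) (𝓝 (f x)) :=
  tendsto_comp_of_locally_uniform_limit hf tendsto_snd fun u hu =>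
    ⟨Set.univ, univ_mem, (tendsto_fst.eventually (hF u hu)).mono fun _ hq y _ => hq y⟩

theorem eventually_disjoint_image_closedBall_of_tendstoUniformly {ι X : Type*}
    [MetricSpace X] {F : ι → X → X} {f : X → X} {p : Filter ι} {x : X}
    (hF : TendstoUniformly F f p) (hf : ContinuousAt f x) (hx : f x ≠ x) :
    ∃ r > 0, ∀ᶠ i in p, Disjoint (F i '' closedBall x r) (closedBall x r) := by
  set ε := dist (f x) x / 2 with hε_def
  have hε : 0 < ε := half_pos (dist_pos.mpr hx)
  obtain ⟨pa, hpa, pb, hpb, hnear⟩ := eventually_prod_iff.mp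
    (tendsto_uncurry_prod_nhds_of_tendstoUniformly hF hf (ball_mem_nhds _ hε))
  obtain ⟨ρ, hρ, hball⟩ := Metric.eventually_nhds_iff_ball.mp hpb
  -- `ρ / 2` keeps the ball where `F i` lands in `ball (f x) ε`; `ε` keeps it away from that ball.
  refine ⟨min (ρ / 2) ε, lt_min (half_pos hρ) hε, hpa.mono fun i hi => ?_⟩
  rw [Set.disjoint_left]
  rintro _ ⟨z, hz, rfl⟩ hFz
  have hzρ : z ∈ ball x ρ :=
    closedBall_subset_ball ((min_le_left _ _).trans_lt (half_lt_self hρ)) hz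
  have hnear_fx : dist (F i z) (f x) < ε := hnear hi (hball z hzρ)
  have hnear_x : dist (F i z) x ≤ ε := (mem_closedBall.mp hFz).trans (min_le_right _ _)
  linarith [dist_triangle_left (f x) x (F i z)]

/-- Proposition 3.6: on a closed symplectic manifold satisfying the energy–capacity
inequality (every closed ball displaceable by a Hamiltonian diffeomorphism has positive
displacement energy, where `ν` denotes the Hofer norm), if `φ_{H_i}` are Hamiltonian paths
with `‖H̄#H_i‖ → 0` (so that the Hofer norms `ν((φ_H¹)⁻¹φ_{H_i}¹) → 0`) and the time-one
maps `ψ_i = φ_{H_i}¹` converge uniformly to a map `ψ`, then `ψ = φ_H¹ = φ`. -/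
theorem stmt7 (M : Type*) [MetricSpace M] [CompactSpace M]
    (Ham : Set (Homeomorph M M)) (ν : Homeomorph M M → ℝ)
    (hEC : ∀ (x : M) (r : ℝ), 0 < r →
      (∃ g ∈ Ham, Disjoint ((⇑g) '' closedBall x r) (closedBall x r)) →
      ∃ e > 0, ∀ g ∈ Ham, Disjoint ((⇑g) '' closedBall x r) (closedBall x r) → e ≤ ν g)
    (φ : Homeomorph M M) (ψi : ℕ → Homeomorph M M) (ψ : M → M)
    (hmem : ∀ i, (ψi i).trans φ.symm ∈ Ham)
    (hν : Tendsto (fun i => ν ((ψi i).trans φ.symm)) atTop (𝓝 0))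
    (hC0 : TendstoUniformly (fun i x => ψi i x) ψ atTop) :
    ψ = ⇑φ := by
  by_contra hne
  obtain ⟨x₀, hx₀⟩ : ∃ x, φ.symm (ψ x) ≠ x :=
    not_forall.mp fun h => hne (funext fun x => φ.symm_apply_eq.mp (h x))
  have hψ : Continuous ψ := hC0.continuous (.of_forall fun i => (ψi i).continuous)
  have hconv : TendstoUniformly (fun i => (ψi i).trans φ.symm) (φ.symm ∘ ψ) atTop :=
    (CompactSpace.uniformContinuous_of_continuous φ.symm.continuous).comp_tendstoUniformly hC0
  obtain ⟨r, hr, hdisp⟩ := eventually_disjoint_image_closedBall_of_tendstoUniformly hconv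
    (φ.symm.continuous.comp hψ).continuousAt hx₀
  obtain ⟨e, he, hbound⟩ := hEC x₀ r hr <|
    let ⟨i, hi⟩ := hdisp.exists; ⟨_, hmem i, hi⟩
  obtain ⟨i, hdi, hνi⟩ := (hdisp.and (hν.eventually_lt_const he)).exists
  exact (hbound _ (hmem i) hdi).not_gt hνi
end

section
/- The set Hameo(M,ω) of Hamiltonian homeomorphisms — i.e., homeomorphisms h of M such that h = C⁰-lim φ_{H_i}¹ for some sequence of smooth Hamiltonians H_i which is Cauchy in the L^{(1,∞)} Hofer norm and whose flows φ_{H_i} are Cauchy in the C⁰-metric on paths — forms a subgroup of Homeo(M). -/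
/-! `hdist` is the uniform distance in `C(M, M) × C(M, M)` between homeomorphisms paired with
their inverses; composition is continuous there (`M` is compact), so `C⁰`-limits respect the
group operations. The Hofer norm integrates over time the diameter of the range of the
Hamiltonian, which is subadditive and invariant under composition with homeomorphisms.
Hofer-Cauchy Hamiltonians need not be equicontinuous, so to see that the composed and inverted
sequences are again Cauchy, every difference is compared with one fixed term of the sequences,
whose flows and Hamiltonian are uniformly continuous on `[0, 1] × M`; the `C⁰`-closeness of the
flows then makes the remaining error uniformly small. -/

open Filter Topology MeasureTheory

noncomputable def cdist {M : Type*} [MetricSpace M] (φ ψ : Homeomorph M M) : ℝ :=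
  ⨆ x, dist (φ x) (ψ x)

noncomputable def hdist {M : Type*} [MetricSpace M] (φ ψ : Homeomorph M M) : ℝ :=
  max (cdist φ ψ) (cdist φ.symm ψ.symm)

noncomputable def pdist {M : Type*} [MetricSpace M] (lam mu : ℝ → Homeomorph M M) : ℝ :=
  ⨆ t : Set.Icc (0:ℝ) 1, hdist (lam t) (mu t)

noncomputable def hnorm {M : Type*} (F : ℝ → M → ℝ) : ℝ :=
  ∫ t in (0:ℝ)..1, ((⨆ x, F t x) - ⨅ x, F t x)

noncomputable def dham {M : Type*} [MetricSpace M]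
    (p q : (ℝ → Homeomorph M M) × (ℝ → M → ℝ)) : ℝ :=
  hnorm (fun t x => p.2 t x - q.2 t x) + pdist p.1 q.1

noncomputable def pcomp {M : Type*} [MetricSpace M]
    (p q : (ℝ → Homeomorph M M) × (ℝ → M → ℝ)) :
    (ℝ → Homeomorph M M) × (ℝ → M → ℝ) :=
  (fun t => (q.1 t).trans (p.1 t), fun t x => p.2 t x + q.2 t ((p.1 t).symm x))

noncomputable def pinv {M : Type*} [MetricSpace M]
    (p : (ℝ → Homeomorph M M) × (ℝ → M → ℝ)) :
    (ℝ → Homeomorph M M) × (ℝ → M → ℝ) :=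
  (fun t => (p.1 t).symm, fun t x => -(p.2 t (p.1 t x)))

open Set Metric Function

section UniformDistance

variable {M : Type*} [MetricSpace M]

lemma hdist_symm (φ ψ : M ≃ₜ M) : hdist φ.symm ψ.symm = hdist φ ψ := by
  rw [hdist, hdist, φ.symm_symm, ψ.symm_symm, max_comm]

lemma pdist_symm (γ γ' : ℝ → M ≃ₜ M) :
    pdist (fun t => (γ t).symm) (fun t => (γ' t).symm) = pdist γ γ' := by
  simp only [pdist, hdist_symm]

lemma pdist_le {γ γ' : ℝ → M ≃ₜ M} {C : ℝ} (h : ∀ t ∈ Icc (0:ℝ) 1, hdist (γ t) (γ' t) ≤ C) :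
    pdist γ γ' ≤ C :=
  haveI : Nonempty (Icc (0:ℝ) 1) := ⟨⟨0, left_mem_Icc.2 zero_le_one⟩⟩
  ciSup_le fun t => h t t.2

variable [CompactSpace M]

lemma cdist_eq_dist (φ ψ : M ≃ₜ M) : cdist φ ψ = dist (φ : C(M, M)) ψ := by
  rw [cdist, ContinuousMap.dist_eq_iSup]
  rfl

lemma dist_le_cdist (φ ψ : M ≃ₜ M) (x : M) : dist (φ x) (ψ x) ≤ cdist φ ψ :=
  cdist_eq_dist φ ψ ▸ ContinuousMap.dist_apply_le_dist (f := (φ : C(M, M))) (g := ψ) x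

lemma cdist_nonneg (φ ψ : M ≃ₜ M) : 0 ≤ cdist φ ψ :=
  cdist_eq_dist φ ψ ▸ dist_nonneg

lemma cdist_le {φ ψ : M ≃ₜ M} {C : ℝ} (hC : 0 ≤ C) (h : ∀ x, dist (φ x) (ψ x) ≤ C) :
    cdist φ ψ ≤ C := by
  rw [cdist_eq_dist]
  exact (ContinuousMap.dist_le hC).2 h

def withInverse (φ : M ≃ₜ M) : C(M, M) × C(M, M) := (φ, φ.symm)

lemma hdist_eq_dist (φ ψ : M ≃ₜ M) : hdist φ ψ = dist (withInverse φ) (withInverse ψ) := by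
  rw [hdist, Prod.dist_eq, cdist_eq_dist, cdist_eq_dist]
  rfl

lemma hdist_nonneg (φ ψ : M ≃ₜ M) : 0 ≤ hdist φ ψ :=
  hdist_eq_dist φ ψ ▸ dist_nonneg

lemma hdist_self (φ : M ≃ₜ M) : hdist φ φ = 0 := by
  rw [hdist_eq_dist, dist_self]

lemma hdist_le_diam (φ ψ : M ≃ₜ M) : hdist φ ψ ≤ diam (univ : Set M) := by
  have hM : Bornology.IsBounded (univ : Set M) := isCompact_univ.isBounded
  refine max_le (cdist_le diam_nonneg fun x => ?_) (cdist_le diam_nonneg fun x => ?_) <;>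
    exact dist_le_diam_of_mem hM (mem_univ _) (mem_univ _)

lemma cdist_trans_le (a a' b b' b₀ : M ≃ₜ M) {η : ℝ} (hη : 0 ≤ η)
    (hb₀ : ∀ x, dist (b₀ (a x)) (b₀ (a' x)) ≤ η) :
    cdist (a.trans b) (a'.trans b') ≤ cdist b b₀ + η + cdist b₀ b' := by
  refine cdist_le (by linarith [cdist_nonneg b b₀, cdist_nonneg b₀ b']) fun x => ?_
  calc dist (b (a x)) (b' (a' x))
      ≤ dist (b (a x)) (b₀ (a x)) + dist (b₀ (a x)) (b₀ (a' x)) + dist (b₀ (a' x)) (b' (a' x)) :=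
        dist_triangle4 _ _ _ _
    _ ≤ cdist b b₀ + η + cdist b₀ b' := by
        gcongr
        exacts [dist_le_cdist _ _ _, hb₀ x, dist_le_cdist _ _ _]

lemma hdist_trans_le (a a' b b' a₀ b₀ : M ≃ₜ M) {η : ℝ} (hη : 0 ≤ η)
    (hb₀ : ∀ x, dist (b₀ (a x)) (b₀ (a' x)) ≤ η)
    (ha₀ : ∀ x, dist (a₀.symm (b.symm x)) (a₀.symm (b'.symm x)) ≤ η) :
    hdist (a.trans b) (a'.trans b') ≤
      hdist a a₀ + hdist a₀ a' + hdist b b₀ + hdist b₀ b' + η := by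
  have hfwd := cdist_trans_le a a' b b' b₀ hη hb₀
  have hbwd : cdist (a.trans b).symm (a'.trans b').symm ≤
      cdist a.symm a₀.symm + η + cdist a₀.symm a'.symm :=
    cdist_trans_le b.symm b'.symm a.symm a'.symm a₀.symm hη ha₀
  have := hdist_nonneg a a₀
  have := hdist_nonneg a₀ a'
  have := hdist_nonneg b b₀
  have := hdist_nonneg b₀ b'
  simp only [hdist] at *
  refine max_le ?_ ?_
  · linarith [le_max_left (cdist b b₀) (cdist b.symm b₀.symm),
      le_max_left (cdist b₀ b') (cdist b₀.symm b'.symm)]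
  · linarith [le_max_right (cdist a a₀) (cdist a.symm a₀.symm),
      le_max_right (cdist a₀ a') (cdist a₀.symm a'.symm)]

lemma tendsto_hdist_trans {a b : ℕ → M ≃ₜ M} {g h : M ≃ₜ M}
    (ha : Tendsto (fun i => hdist (a i) g) atTop (𝓝 0))
    (hb : Tendsto (fun i => hdist (b i) h) atTop (𝓝 0)) :
    Tendsto (fun i => hdist ((a i).trans (b i)) (g.trans h)) atTop (𝓝 0) := by
  simp only [hdist_eq_dist, ← tendsto_iff_dist_tendsto_zero] at *
  have hcomp : Continuous fun p : (C(M, M) × C(M, M)) × (C(M, M) × C(M, M)) =>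
      (p.2.1.comp p.1.1, p.1.2.comp p.2.2) :=
    (ContinuousMap.continuous_comp'.comp (continuous_fst.fst.prodMk continuous_snd.fst)).prodMk
      (ContinuousMap.continuous_comp'.comp (continuous_snd.snd.prodMk continuous_fst.snd))
  exact (hcomp.tendsto _).comp (ha.prodMk_nhds hb)

lemma hdist_le_pdist (γ γ' : ℝ → M ≃ₜ M) {t : ℝ} (ht : t ∈ Icc (0:ℝ) 1) :
    hdist (γ t) (γ' t) ≤ pdist γ γ' :=
  le_ciSup (f := fun s : Icc (0:ℝ) 1 => hdist (γ s) (γ' s))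
    ⟨diam univ, by rintro _ ⟨s, rfl⟩; exact hdist_le_diam _ _⟩ ⟨t, ht⟩

lemma dist_apply_le_pdist (γ γ' : ℝ → M ≃ₜ M) {t : ℝ} (ht : t ∈ Icc (0:ℝ) 1) (x : M) :
    dist (γ t x) (γ' t x) ≤ pdist γ γ' :=
  (dist_le_cdist _ _ x).trans ((le_max_left _ _).trans (hdist_le_pdist γ γ' ht))

lemma dist_symm_apply_le_pdist (γ γ' : ℝ → M ≃ₜ M) {t : ℝ} (ht : t ∈ Icc (0:ℝ) 1) (x : M) :
    dist ((γ t).symm x) ((γ' t).symm x) ≤ pdist γ γ' :=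
  (dist_le_cdist _ _ x).trans ((le_max_right _ _).trans (hdist_le_pdist γ γ' ht))

lemma pdist_nonneg (γ γ' : ℝ → M ≃ₜ M) : 0 ≤ pdist γ γ' :=
  Real.iSup_nonneg fun _ => hdist_nonneg _ _

lemma pdist_self (γ : ℝ → M ≃ₜ M) : pdist γ γ = 0 := by
  simp only [pdist, hdist_self, Real.iSup_const_zero]

end UniformDistance

section HoferNorm

variable {M : Type*} [MetricSpace M]

lemma hnorm_comp_homeomorph (F : ℝ → M → ℝ) (e : ℝ → M ≃ₜ M) :
    hnorm (fun t x => F t (e t x)) = hnorm F := by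
  simp only [hnorm, fun t => (e t).surjective.iSup_comp (F t),
    fun t => (e t).surjective.iInf_comp (F t)]

lemma continuous_uncurry_comp {F : ℝ → M → ℝ} {a : ℝ → M ≃ₜ M} (hF : Continuous (uncurry F))
    (ha : Continuous (uncurry fun t x => a t x)) :
    Continuous (uncurry fun t x => F t (a t x)) :=
  hF.comp (continuous_fst.prodMk ha)

variable [CompactSpace M]

lemma iSup_sub_iInf_eq_diam_range {f : M → ℝ} (hf : Continuous f) :
    (⨆ x, f x) - ⨅ x, f x = diam (range f) :=
  (Real.diam_eq (isCompact_range hf).isBounded).symm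

lemma continuous_diam_range {F : ℝ → M → ℝ} (hF : Continuous (uncurry F)) :
    Continuous fun t => diam (range (F t)) := by
  have h := (isCompact_univ.continuous_sSup hF).sub (isCompact_univ.continuous_sInf hF)
  simp only [image_univ] at h
  convert h using 2 with t
  exact (iSup_sub_iInf_eq_diam_range (hF.comp (Continuous.prodMk_right t))).symm

lemma hnorm_eq_integral_diam {F : ℝ → M → ℝ} (hF : Continuous (uncurry F)) :
    hnorm F = ∫ t in (0:ℝ)..1, diam (range (F t)) := by
  unfold hnorm
  congr 1 with t
  exact iSup_sub_iInf_eq_diam_range (hF.comp (Continuous.prodMk_right t))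

lemma hnorm_nonneg {F : ℝ → M → ℝ} (hF : Continuous (uncurry F)) : 0 ≤ hnorm F := by
  rw [hnorm_eq_integral_diam hF]
  exact intervalIntegral.integral_nonneg zero_le_one fun _ _ => diam_nonneg

lemma diam_range_add_le {f g : M → ℝ} (hf : Continuous f) (hg : Continuous g) :
    diam (range (f + g)) ≤ diam (range f) + diam (range g) := by
  refine diam_le_of_forall_dist_le (by positivity) ?_
  rintro _ ⟨x, rfl⟩ _ ⟨y, rfl⟩
  exact (dist_add_add_le _ _ _ _).trans (add_le_add
    (dist_le_diam_of_mem (isCompact_range hf).isBounded (mem_range_self x) (mem_range_self y))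
    (dist_le_diam_of_mem (isCompact_range hg).isBounded (mem_range_self x) (mem_range_self y)))

lemma hnorm_add_le {F G : ℝ → M → ℝ} (hF : Continuous (uncurry F))
    (hG : Continuous (uncurry G)) :
    hnorm (fun t x => F t x + G t x) ≤ hnorm F + hnorm G := by
  have hFG : Continuous (uncurry fun t x => F t x + G t x) := hF.add hG
  rw [hnorm_eq_integral_diam hFG, hnorm_eq_integral_diam hF, hnorm_eq_integral_diam hG,
    ← intervalIntegral.integral_add ((continuous_diam_range hF).intervalIntegrable _ _)
      ((continuous_diam_range hG).intervalIntegrable _ _)]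
  exact intervalIntegral.integral_mono_on zero_le_one
    ((continuous_diam_range hFG).intervalIntegrable _ _)
    (((continuous_diam_range hF).add (continuous_diam_range hG)).intervalIntegrable _ _)
    fun t _ => diam_range_add_le (hF.comp (Continuous.prodMk_right t))
      (hG.comp (Continuous.prodMk_right t))

lemma hnorm_le_of_abs_le {F : ℝ → M → ℝ} (hF : Continuous (uncurry F)) {η : ℝ} (hη : 0 ≤ η)
    (h : ∀ t ∈ Icc (0:ℝ) 1, ∀ x, |F t x| ≤ η) : hnorm F ≤ 2 * η := by
  rw [hnorm_eq_integral_diam hF]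
  calc ∫ t in (0:ℝ)..1, diam (range (F t))
      ≤ ∫ _ in (0:ℝ)..1, 2 * η :=
        intervalIntegral.integral_mono_on zero_le_one
          ((continuous_diam_range hF).intervalIntegrable _ _) intervalIntegrable_const
          fun t ht => diam_le_of_forall_dist_le (by positivity) <| by
            rintro _ ⟨x, rfl⟩ _ ⟨y, rfl⟩
            rw [Real.dist_eq]
            linarith [abs_sub (F t x) (F t y), h t ht x, h t ht y]
    _ = 2 * η := by simp

lemma hnorm_comp_sub_comp_le {F G K : ℝ → M → ℝ} {a b : ℝ → M ≃ₜ M}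
    (hF : Continuous (uncurry F)) (hG : Continuous (uncurry G)) (hK : Continuous (uncurry K))
    (ha : Continuous (uncurry fun t x => a t x)) (hb : Continuous (uncurry fun t x => b t x))
    {η : ℝ} (hη : 0 ≤ η) (h : ∀ t ∈ Icc (0:ℝ) 1, ∀ x, |K t (a t x) - K t (b t x)| ≤ η) :
    hnorm (fun t x => F t (a t x) - G t (b t x)) ≤
      hnorm (fun t x => F t x - K t x) + hnorm (fun t x => K t x - G t x) + 2 * η := by
  have hKa := continuous_uncurry_comp hK ha
  have hKb := continuous_uncurry_comp hK hb
  have h₁ : Continuous (uncurry fun t x => F t (a t x) - K t (a t x)) :=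
    (continuous_uncurry_comp hF ha).sub hKa
  have h₂ : Continuous (uncurry fun t x => K t (b t x) - G t (b t x)) :=
    hKb.sub (continuous_uncurry_comp hG hb)
  have h₃ : Continuous (uncurry fun t x => K t (a t x) - K t (b t x)) := hKa.sub hKb
  have h₂₃ : Continuous (uncurry fun t x =>
      (K t (b t x) - G t (b t x)) + (K t (a t x) - K t (b t x))) := h₂.add h₃
  have hsplit : (fun t x => F t (a t x) - G t (b t x)) = fun t x =>
      (F t (a t x) - K t (a t x)) +
        ((K t (b t x) - G t (b t x)) + (K t (a t x) - K t (b t x))) := by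
    funext t x
    ring
  have hle₁ := hnorm_add_le h₁ h₂₃
  have hle₂ := hnorm_add_le h₂ h₃
  have hle₃ := hnorm_le_of_abs_le h₃ hη h
  rw [hnorm_comp_homeomorph (fun t x => F t x - K t x) a] at hle₁
  rw [hnorm_comp_homeomorph (fun t x => K t x - G t x) b] at hle₂
  rw [hsplit]
  linarith

end HoferNorm

lemma exists_pos_forall_Icc_dist_lt {M N : Type*} [MetricSpace M] [CompactSpace M]
    [MetricSpace N] {f : ℝ → M → N} (hf : Continuous (uncurry f)) {ε : ℝ} (hε : 0 < ε) :
    ∃ δ > 0, ∀ t ∈ Icc (0:ℝ) 1, ∀ x y, dist x y < δ → dist (f t x) (f t y) < ε := by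
  obtain ⟨δ, hδ, hfδ⟩ := Metric.uniformContinuousOn_iff.mp
    ((isCompact_Icc.prod isCompact_univ).uniformContinuousOn_of_continuous hf.continuousOn) ε hε
  refine ⟨δ, hδ, fun t ht x y hxy => hfδ (t, x) ⟨ht, mem_univ x⟩ (t, y) ⟨ht, mem_univ y⟩ ?_⟩
  simpa [Prod.dist_eq, hδ] using hxy

/-- A Hamiltonian path `t ↦ φ_H^t` together with its generating Hamiltonian `H`. -/
abbrev HamPath (M : Type*) [TopologicalSpace M] := (ℝ → M ≃ₜ M) × (ℝ → M → ℝ)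

section HamPath

variable {M : Type*} [MetricSpace M]

structure JointlyContinuous (p : HamPath M) : Prop where
  flow : Continuous (uncurry fun t x => p.1 t x)
  flow_symm : Continuous (uncurry fun t x => (p.1 t).symm x)
  ham : Continuous (uncurry p.2)

def DhamCauchy (u : ℕ → HamPath M) : Prop :=
  ∀ ε > 0, ∃ N, ∀ i ≥ N, ∀ j ≥ N, dham (u i) (u j) < ε

variable [CompactSpace M]

lemma dham_self (p : HamPath M) : dham p p = 0 := by
  simp only [dham, sub_self, pdist_self, add_zero, hnorm, Real.iSup_const_zero,
    Real.iInf_const_zero, intervalIntegral.integral_zero]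

lemma DhamCauchy.const (p : HamPath M) : DhamCauchy fun _ : ℕ => p :=
  fun _ hε => ⟨0, fun _ _ _ _ => (dham_self p).symm ▸ hε⟩

lemma DhamCauchy.exists_hnorm_pdist_lt {u : ℕ → HamPath M} (hu : ∀ i, JointlyContinuous (u i))
    (hc : DhamCauchy u) {ε : ℝ} (hε : 0 < ε) :
    ∃ N, ∀ i ≥ N, ∀ j ≥ N,
      hnorm (fun t x => (u i).2 t x - (u j).2 t x) < ε ∧ pdist (u i).1 (u j).1 < ε := by
  obtain ⟨N, hN⟩ := hc ε hε
  refine ⟨N, fun i hi j hj => ?_⟩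
  have hlt := hN i hi j hj
  have h₁ := hnorm_nonneg (F := fun t x => (u i).2 t x - (u j).2 t x) ((hu i).ham.sub (hu j).ham)
  have h₂ := pdist_nonneg (u i).1 (u j).1
  unfold dham at hlt
  constructor <;> linarith

end HamPath

section Group

variable {M : Type*} [MetricSpace M] [CompactSpace M]

lemma pdist_pcomp_le (p p' q q' p₀ q₀ : HamPath M) {δ₁ δ₂ η : ℝ} (hη : 0 ≤ η)
    (hp₀ : ∀ t ∈ Icc (0:ℝ) 1, ∀ x y, dist x y < δ₁ → dist (p₀.1 t x) (p₀.1 t y) < η)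
    (hq₀ : ∀ t ∈ Icc (0:ℝ) 1, ∀ x y, dist x y < δ₂ →
      dist ((q₀.1 t).symm x) ((q₀.1 t).symm y) < η)
    (hq : pdist q.1 q'.1 < δ₁) (hp : pdist p.1 p'.1 < δ₂) :
    pdist (pcomp p q).1 (pcomp p' q').1 ≤
      pdist q.1 q₀.1 + pdist q₀.1 q'.1 + pdist p.1 p₀.1 + pdist p₀.1 p'.1 + η := by
  refine pdist_le fun t ht => (hdist_trans_le (q.1 t) (q'.1 t) (p.1 t) (p'.1 t) (q₀.1 t) (p₀.1 t) hη
    (fun x => (hp₀ t ht _ _ ((dist_apply_le_pdist _ _ ht x).trans_lt hq)).le)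
    (fun x => (hq₀ t ht _ _ ((dist_symm_apply_le_pdist _ _ ht x).trans_lt hp)).le)).trans ?_
  gcongr <;> exact hdist_le_pdist _ _ ht

lemma hnorm_pcomp_sub_le {p p' q q' q₀ : HamPath M} (hp : JointlyContinuous p)
    (hp' : JointlyContinuous p') (hq : JointlyContinuous q) (hq' : JointlyContinuous q')
    (hq₀ : JointlyContinuous q₀) {δ η : ℝ} (hη : 0 ≤ η)
    (hq₀δ : ∀ t ∈ Icc (0:ℝ) 1, ∀ x y, dist x y < δ → dist (q₀.2 t x) (q₀.2 t y) < η)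
    (hpp' : pdist p.1 p'.1 < δ) :
    hnorm (fun t x => (pcomp p q).2 t x - (pcomp p' q').2 t x) ≤
      hnorm (fun t x => p.2 t x - p'.2 t x) + hnorm (fun t x => q.2 t x - q₀.2 t x) +
        hnorm (fun t x => q₀.2 t x - q'.2 t x) + 2 * η := by
  have hsplit : (fun t x => (pcomp p q).2 t x - (pcomp p' q').2 t x) = fun t x =>
      (p.2 t x - p'.2 t x) + (q.2 t ((p.1 t).symm x) - q'.2 t ((p'.1 t).symm x)) := by
    funext t x
    simp only [pcomp]
    ring
  have hP : Continuous (uncurry fun t x => p.2 t x - p'.2 t x) := hp.ham.sub hp'.ham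
  have hQ : Continuous (uncurry fun t x => q.2 t ((p.1 t).symm x) - q'.2 t ((p'.1 t).symm x)) :=
    (continuous_uncurry_comp (a := fun t => (p.1 t).symm) hq.ham hp.flow_symm).sub
      (continuous_uncurry_comp (a := fun t => (p'.1 t).symm) hq'.ham hp'.flow_symm)
  have hQ_le := hnorm_comp_sub_comp_le (a := fun t => (p.1 t).symm) (b := fun t => (p'.1 t).symm)
    hq.ham hq'.ham hq₀.ham hp.flow_symm hp'.flow_symm hη fun t ht x =>
      (Real.dist_eq _ _ ▸ hq₀δ t ht _ _ ((dist_symm_apply_le_pdist _ _ ht x).trans_lt hpp')).le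
  rw [hsplit]
  linarith [hnorm_add_le hP hQ]

lemma hnorm_pinv_sub_le {p p' p₀ : HamPath M} (hp : JointlyContinuous p)
    (hp' : JointlyContinuous p') (hp₀ : JointlyContinuous p₀) {δ η : ℝ} (hη : 0 ≤ η)
    (hp₀δ : ∀ t ∈ Icc (0:ℝ) 1, ∀ x y, dist x y < δ → dist (p₀.2 t x) (p₀.2 t y) < η)
    (hp'p : pdist p'.1 p.1 < δ) :
    hnorm (fun t x => (pinv p).2 t x - (pinv p').2 t x) ≤
      hnorm (fun t x => p'.2 t x - p₀.2 t x) + hnorm (fun t x => p₀.2 t x - p.2 t x) + 2 * η := by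
  have hsplit : (fun t x => (pinv p).2 t x - (pinv p').2 t x) = fun t x =>
      p'.2 t (p'.1 t x) - p.2 t (p.1 t x) := by
    funext t x
    simp only [pinv]
    ring
  rw [hsplit]
  exact hnorm_comp_sub_comp_le hp'.ham hp.ham hp₀.ham hp'.flow hp.flow hη fun t ht x =>
    (Real.dist_eq _ _ ▸ hp₀δ t ht _ _ ((dist_apply_le_pdist _ _ ht x).trans_lt hp'p)).le

lemma DhamCauchy.pcomp {u v : ℕ → HamPath M} (hu : ∀ i, JointlyContinuous (u i))
    (hv : ∀ i, JointlyContinuous (v i)) (huc : DhamCauchy u) (hvc : DhamCauchy v) :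
    DhamCauchy fun i => pcomp (v i) (u i) := by
  intro ε hε
  have hη : 0 < ε / 10 := by positivity
  obtain ⟨Nu, hNu⟩ := huc.exists_hnorm_pdist_lt hu hη
  obtain ⟨Nv, hNv⟩ := hvc.exists_hnorm_pdist_lt hv hη
  set k := max Nu Nv
  obtain ⟨δ₁, hδ₁, hvk⟩ := exists_pos_forall_Icc_dist_lt (hv k).flow hη
  obtain ⟨δ₂, hδ₂, huk⟩ := exists_pos_forall_Icc_dist_lt (hu k).flow_symm hη
  obtain ⟨δ₃, hδ₃, hHk⟩ := exists_pos_forall_Icc_dist_lt (hu k).ham hη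
  obtain ⟨Nu', hNu'⟩ := huc.exists_hnorm_pdist_lt hu hδ₁
  obtain ⟨Nv', hNv'⟩ := hvc.exists_hnorm_pdist_lt hv (lt_min hδ₂ hδ₃)
  refine ⟨max k (max Nu' Nv'), fun i hi j hj => ?_⟩
  have hvij := (hNv' i (by omega) j (by omega)).2
  have hpath := pdist_pcomp_le (v i) (v j) (u i) (u j) (v k) (u k) hη.le hvk huk
    (hNu' i (by omega) j (by omega)).2 (hvij.trans_le (min_le_left _ _))
  have hham := hnorm_pcomp_sub_le (hv i) (hv j) (hu i) (hu j) (hu k) hη.le hHk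
    (hvij.trans_le (min_le_right _ _))
  have := hNu i (by omega) k (by omega)
  have := hNu k (by omega) j (by omega)
  have := hNv i (by omega) k (by omega)
  have := hNv k (by omega) j (by omega)
  have := hNv i (by omega) j (by omega)
  unfold dham
  linarith

lemma DhamCauchy.pinv {u : ℕ → HamPath M} (hu : ∀ i, JointlyContinuous (u i))
    (huc : DhamCauchy u) : DhamCauchy fun i => pinv (u i) := by
  intro ε hε
  have hη : 0 < ε / 5 := by positivity
  obtain ⟨N, hN⟩ := huc.exists_hnorm_pdist_lt hu hη
  obtain ⟨δ, hδ, hHN⟩ := exists_pos_forall_Icc_dist_lt (hu N).ham hη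
  obtain ⟨N', hN'⟩ := huc.exists_hnorm_pdist_lt hu hδ
  refine ⟨max N N', fun i hi j hj => ?_⟩
  have hham := hnorm_pinv_sub_le (hu i) (hu j) (hu N) hη.le hHN (hN' j (by omega) i (by omega)).2
  have := hN j (by omega) N le_rfl
  have := hN N le_rfl i (by omega)
  have hpath : pdist (_root_.pinv (u i)).1 (_root_.pinv (u j)).1 = pdist (u i).1 (u j).1 :=
    pdist_symm _ _
  have := hN i (by omega) j (by omega)
  unfold dham
  linarith

end Group

/-- `Q` models the smooth Hamiltonian paths starting at the identity, each paired with its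
generating Hamiltonian. -/
theorem stmt14_general (M : Type*) [MetricSpace M] [CompactSpace M]
    (Q : Set ((ℝ → Homeomorph M M) × (ℝ → M → ℝ)))
    (hQcont : ∀ p ∈ Q, Continuous (fun q : ℝ × M => p.1 q.1 q.2) ∧
      Continuous (fun q : ℝ × M => (p.1 q.1).symm q.2) ∧
      Continuous (fun q : ℝ × M => p.2 q.1 q.2) ∧ p.1 0 = Homeomorph.refl M)
    (hQid : ((fun _ => Homeomorph.refl M, fun _ _ => (0:ℝ)) :
      (ℝ → Homeomorph M M) × (ℝ → M → ℝ)) ∈ Q)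
    (hQmul : ∀ p ∈ Q, ∀ q ∈ Q, pcomp p q ∈ Q)
    (hQinv : ∀ p ∈ Q, pinv p ∈ Q) :
    let Hameo : Set (Homeomorph M M) :=
      {h | ∃ u : ℕ → (ℝ → Homeomorph M M) × (ℝ → M → ℝ),
        (∀ i, u i ∈ Q) ∧
        (∀ ε > 0, ∃ N, ∀ i ≥ N, ∀ j ≥ N, dham (u i) (u j) < ε) ∧
        Tendsto (fun i => hdist ((u i).1 1) h) atTop (𝓝 0)}
    (Homeomorph.refl M ∈ Hameo) ∧
    (∀ g ∈ Hameo, ∀ h ∈ Hameo, g.trans h ∈ Hameo) ∧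
    (∀ h ∈ Hameo, h.symm ∈ Hameo) := by
  intro Hameo
  have hcont : ∀ p ∈ Q, JointlyContinuous p := fun p hp =>
    ⟨(hQcont p hp).1, (hQcont p hp).2.1, (hQcont p hp).2.2.1⟩
  refine ⟨⟨fun _ => _, fun _ => hQid, DhamCauchy.const _, ?_⟩, ?_, ?_⟩
  · simpa only [hdist_self] using tendsto_const_nhds
  · rintro g ⟨u, huQ, huc, hu⟩ h ⟨v, hvQ, hvc, hv⟩
    exact ⟨fun i => pcomp (v i) (u i), fun i => hQmul _ (hvQ i) _ (huQ i),
      DhamCauchy.pcomp (fun i => hcont _ (huQ i)) (fun i => hcont _ (hvQ i)) huc hvc,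
      tendsto_hdist_trans hu hv⟩
  · rintro h ⟨u, huQ, huc, hu⟩
    exact ⟨fun i => pinv (u i), fun i => hQinv _ (huQ i),
      DhamCauchy.pinv (fun i => hcont _ (huQ i)) huc,
      hu.congr fun i => (hdist_symm ((u i).1 1) h).symm⟩

/-- The group of Hamiltonian homeomorphisms forms a subgroup of `Homeo(M)`.
Here `Q` stands for the set of pairs (smooth Hamiltonian path starting at `id`, its
generating normalized Hamiltonian), abstractly given with joint continuity and closure
under the group operations, and `h ∈ Hameo(M,ω)` iff `h = C⁰-lim φ_{H_i}¹` for a sequence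
`(φ_{H_i}, H_i)` in `Q` which is Cauchy in the Hamiltonian metric `dham` (Hofer-Cauchy
Hamiltonians and `C⁰`-Cauchy paths). The claim is that `Hameo(M,ω)` contains the identity
and is closed under composition and inverse. -/
theorem stmt14 (M : Type*) [MetricSpace M] [CompactSpace M] [Nonempty M]
    (Q : Set ((ℝ → Homeomorph M M) × (ℝ → M → ℝ)))
    (hQcont : ∀ p ∈ Q, Continuous (fun q : ℝ × M => p.1 q.1 q.2) ∧
      Continuous (fun q : ℝ × M => (p.1 q.1).symm q.2) ∧
      Continuous (fun q : ℝ × M => p.2 q.1 q.2) ∧ p.1 0 = Homeomorph.refl M)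
    (hQid : ((fun _ => Homeomorph.refl M, fun _ _ => (0:ℝ)) :
      (ℝ → Homeomorph M M) × (ℝ → M → ℝ)) ∈ Q)
    (hQmul : ∀ p ∈ Q, ∀ q ∈ Q, pcomp p q ∈ Q)
    (hQinv : ∀ p ∈ Q, pinv p ∈ Q) :
    let Hameo : Set (Homeomorph M M) :=
      {h | ∃ u : ℕ → (ℝ → Homeomorph M M) × (ℝ → M → ℝ),
        (∀ i, u i ∈ Q) ∧
        (∀ ε > 0, ∃ N, ∀ i ≥ N, ∀ j ≥ N, dham (u i) (u j) < ε) ∧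
        Tendsto (fun i => hdist ((u i).1 1) h) atTop (𝓝 0)}
    (Homeomorph.refl M ∈ Hameo) ∧
    (∀ g ∈ Hameo, ∀ h ∈ Hameo, g.trans h ∈ Hameo) ∧
    (∀ h ∈ Hameo, h.symm ∈ Hameo) :=
  stmt14_general M Q hQcont hQid hQmul hQinv
end
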